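/- arXiv:1309.5564 — 3 statements merged into one kernel-verified Lean document; each statement's English description precedes it below -/
import Mathlib

section
/- Let (S(i)) be the Bernoulli(p) random walk on ℤ started at x, let a ∈ ℤ with x ≠ a, and let τ_a = min{i ≥ 1 : S(i) = a} be the first hitting time of a. Then for every j ≥ 1, P_x{τ_a = j} = (|x-a|/j) · P_x{S(j) = a} = (|x-a|/j) · C(j, (j+x-a)/2) p^{(j+a-x)/2} q^{(j+x-a)/2}. -/
open Finset

noncomputable section

/-- Step value of the Bernoulli walk: `+1` for `true`, `-1` for `false`. -/
def stepVal (b : Bool) : ℤ := if b then 1 else -1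

/-- Position at time `i` of the walk started at `x` with step sequence `ε`. -/
def walkFn (x : ℤ) (ε : ℕ → Bool) (i : ℕ) : ℤ :=
  x + ∑ k ∈ Finset.range i, stepVal (ε k)

/-- Extend a finite sequence by a default value. -/
def extendF {n : ℕ} {α : Type*} (d : α) (ε : Fin n → α) : ℕ → α :=
  fun k => if h : k < n then ε ⟨k, h⟩ else d

/-- Weight of a single step: `p` for `+1`, `1-p` for `-1`. -/
def wt (p : ℝ) (b : Bool) : ℝ := if b then p else 1 - p

open Classical in
/-- Probability, for the Bernoulli(p) walk started at `x`, of an event `P` on the path,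
computed over the horizon `n` (the event should only depend on times `≤ n`). -/
def walkProb (p : ℝ) (x : ℤ) (n : ℕ) (P : (ℕ → ℤ) → Prop) : ℝ :=
  ∑ ε : Fin n → Bool, if P (walkFn x (extendF false ε)) then ∏ k, wt p (ε k) else 0

end

noncomputable def phi (p : ℝ) (j : ℕ) (s : ℤ) : ℝ :=
  if Even ((j:ℤ) - s) ∧ |s| ≤ (j:ℤ) then
    (j.choose (((j:ℤ) - s)/2).toNat : ℝ) * p ^ (((j:ℤ) + s)/2).toNat
      * (1-p) ^ (((j:ℤ) - s)/2).toNat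
  else 0

lemma phi_eq (p : ℝ) {j m u : ℕ} {s : ℤ} (h : m + u = j) (hs : s = (u:ℤ) - m) :
    phi p j s = (j.choose m : ℝ) * p ^ u * (1-p) ^ m := by
  have h1 : (j:ℤ) - s = 2 * m := by omega
  have h2 : (j:ℤ) + s = 2 * u := by omega
  have hc : Even ((j:ℤ) - s) ∧ |s| ≤ (j:ℤ) := by
    constructor
    · exact ⟨m, by omega⟩
    · rw [abs_le]; omega
  rw [phi, if_pos hc, h1, h2]
  norm_num

lemma phi_ne (p : ℝ) {j : ℕ} {s : ℤ} (h : ¬ (Even ((j:ℤ) - s) ∧ |s| ≤ (j:ℤ))) :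
    phi p j s = 0 := if_neg h

lemma phi_cases (p : ℝ) (j : ℕ) (s : ℤ) :
    (∃ m u : ℕ, m + u = j ∧ s = (u:ℤ) - m) ∨ ¬ (Even ((j:ℤ) - s) ∧ |s| ≤ (j:ℤ)) := by
  by_cases h : Even ((j:ℤ) - s) ∧ |s| ≤ (j:ℤ)
  · obtain ⟨⟨m', hm'⟩, hle⟩ := h
    rw [abs_le] at hle
    left
    exact ⟨m'.toNat, (j - m'.toNat), by omega, by omega⟩
  · exact Or.inr h

lemma phi_pascal (p : ℝ) (j : ℕ) (s : ℤ) :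
    phi p (j+1) s = p * phi p j (s-1) + (1-p) * phi p j (s+1) := by
  rcases phi_cases p (j+1) s with ⟨m, u, hmu, hs⟩ | h0
  · rcases Nat.eq_zero_or_pos m with hm | hm
    · subst hm
      have hu : u = j + 1 := by omega
      subst hu
      rw [phi_eq p hmu hs, phi_eq p (m := 0) (u := j) (by omega) (by omega),
        phi_ne p (s := s + 1) (by rintro ⟨-, habs⟩; rw [abs_le] at habs; omega)]
      simp [pow_succ]; ring
    · rcases Nat.eq_zero_or_pos u with hu | hu
      · subst hu
        have hm : m = j + 1 := by omega
        subst hm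
        rw [phi_eq p hmu hs, phi_eq p (s := s + 1) (m := j) (u := 0) (by omega) (by omega),
          phi_ne p (s := s - 1) (by rintro ⟨-, habs⟩; rw [abs_le] at habs; omega)]
        simp [pow_succ]; ring
      · obtain ⟨m', rfl⟩ : ∃ m', m = m' + 1 := ⟨m - 1, by omega⟩
        obtain ⟨u', rfl⟩ : ∃ u', u = u' + 1 := ⟨u - 1, by omega⟩
        rw [phi_eq p hmu hs,
          phi_eq p (m := m' + 1) (u := u') (by omega) (by omega),
          phi_eq p (m := m') (u := u' + 1) (by omega) (by omega),
          Nat.choose_succ_succ j m']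
        push_cast
        ring
  · rw [phi_ne p h0]
    have h1 : phi p j (s - 1) = 0 := by
      apply phi_ne
      rintro ⟨⟨k, hk⟩, habs⟩
      rw [abs_le] at habs
      exact h0 ⟨⟨k, by omega⟩, by rw [abs_le]; omega⟩
    have h2 : phi p j (s + 1) = 0 := by
      apply phi_ne
      rintro ⟨⟨k, hk⟩, habs⟩
      rw [abs_le] at habs
      exact h0 ⟨⟨k + 1, by omega⟩, by rw [abs_le]; omega⟩
    rw [h1, h2]; ring

lemma phi_succ_zero (p : ℝ) {j : ℕ} {s : ℤ}
    (h0 : ¬ (Even ((j:ℤ) + 1 - s) ∧ |s| ≤ (j:ℤ) + 1)) :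
    phi p j (s - 1) = 0 ∧ phi p j (s + 1) = 0 := by
  constructor
  · apply phi_ne
    rintro ⟨⟨k, hk⟩, habs⟩
    rw [abs_le] at habs
    exact h0 ⟨⟨k, by omega⟩, by rw [abs_le]; omega⟩
  · apply phi_ne
    rintro ⟨⟨k, hk⟩, habs⟩
    rw [abs_le] at habs
    exact h0 ⟨⟨k + 1, by omega⟩, by rw [abs_le]; omega⟩

lemma phi_symm (p : ℝ) (j : ℕ) (s : ℤ) : phi (1-p) j (-s) = phi p j s := by
  rcases phi_cases p j s with ⟨m, u, hmu, hs⟩ | h0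
  · rw [phi_eq p hmu hs, phi_eq (1-p) (m := u) (u := m) (by omega) (by omega)]
    rw [show j.choose u = j.choose m by rw [show u = j - m by omega, Nat.choose_symm (by omega)]]
    ring_nf
  · rw [phi_ne p h0]
    apply phi_ne
    rintro ⟨⟨k, hk⟩, habs⟩
    rw [abs_le] at habs
    exact h0 ⟨⟨k - s, by omega⟩, by rw [abs_le]; omega⟩

lemma key_id (A B mm uu : ℝ) (h : mm * A = uu * B) :
    (uu - mm) * (mm + uu - 1) * (A + B) =
      (mm + uu) * (((uu - mm) - 1) * A + ((uu - mm) + 1) * B) := by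
  linear_combination 2 * h

lemma hstep_pos (p : ℝ) {j : ℕ} (hj : 1 ≤ j) {s : ℤ} (hs : 0 < s) :
    (|s| : ℝ)/((j:ℝ)+1) * phi p (j+1) s =
      p * (if s = 1 then 0 else (|s-1| : ℝ)/(j:ℝ) * phi p j (s-1)) +
      (1-p) * (if s = -1 then 0 else (|s+1| : ℝ)/(j:ℝ) * phi p j (s+1)) := by
  have hjR : (j:ℝ) ≠ 0 := by positivity
  have hjR1 : (j:ℝ) + 1 ≠ 0 := by positivity
  rw [if_neg (show s ≠ -1 by omega)]
  rcases eq_or_lt_of_le (show (1:ℤ) ≤ s by omega) with h1 | h2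
  · -- s = 1
    have hs1 : s = 1 := h1.symm
    subst hs1
    rw [if_pos rfl]
    rcases phi_cases p (j+1) 1 with ⟨m, u, hmu, hs_eq⟩ | h0
    · have hu : u = m + 1 := by omega
      subst hu
      obtain ⟨m', rfl⟩ : ∃ m', m = m' + 1 := ⟨m - 1, by omega⟩
      have hjm : j = 2 * (m' + 1) := by omega
      subst hjm
      rw [phi_eq p hmu hs_eq,
        phi_eq p (s := (1:ℤ) + 1) (m := m') (u := m' + 2) (by omega) (by omega)]
      have h3 := Nat.add_one_mul_choose_eq (2 * (m' + 1)) m'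
      have hkey : ((2:ℝ) * (m'+1) + 1) * ((2 * (m'+1)).choose m') =
          ((m':ℝ) + 1) * ((2 * (m'+1) + 1).choose (m' + 1)) := by
        have h4 : (2 * (m'+1) + 1) * (2 * (m'+1)).choose m' =
            (2 * (m'+1) + 1).choose (m' + 1) * (m' + 1) := h3
        have h5 := congrArg (Nat.cast : ℕ → ℝ) h4
        push_cast at h5 ⊢
        linarith [h5]
      push_cast at hkey ⊢
      rw [show |(1:ℝ) + 1| = 2 from by norm_num, show |(1:ℝ)| = 1 from by norm_num]
      field_simp
      linear_combination (-1 * p^(m'+2) * (1-p)^(m'+1)) * hkey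
    · obtain ⟨-, h2z⟩ := phi_succ_zero p (s := 1) h0
      rw [phi_ne p h0, h2z]
      ring
  · -- s ≥ 2
    rw [if_neg (show s ≠ 1 by omega)]
    rcases phi_cases p (j+1) s with ⟨m, u, hmu, hs_eq⟩ | h0
    · rcases Nat.eq_zero_or_pos m with hm | hm
      · subst hm
        have hu : u = j + 1 := by omega
        subst hu
        have hsv : s = (j:ℤ) + 1 := by omega
        rw [phi_eq p hmu hs_eq, phi_eq p (s := s - 1) (m := 0) (u := j) (by omega) (by omega),
          phi_ne p (s := s + 1) (by rintro ⟨-, habs⟩; rw [abs_le] at habs; omega)]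
        rw [hsv]
        push_cast
        rw [abs_of_nonneg (by positivity : (0:ℝ) ≤ (j:ℝ)+1),
          abs_of_nonneg (show (0:ℝ) ≤ (j:ℝ)+1-1 by push_cast; simp)]
        field_simp
        simp only [Nat.choose_zero_right, Nat.cast_one]
        ring
      · obtain ⟨m', rfl⟩ : ∃ m', m = m' + 1 := ⟨m - 1, by omega⟩
        obtain ⟨u', rfl⟩ : ∃ u', u = u' + 1 := ⟨u - 1, by omega⟩
        have hu2 : m' + 2 ≤ u' := by omega
        rw [phi_eq p hmu hs_eq,
          phi_eq p (s := s - 1) (m := m' + 1) (u := u') (by omega) (by omega),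
          phi_eq p (s := s + 1) (m := m') (u := u' + 1) (by omega) (by omega),
          Nat.choose_succ_succ j m']
        have hrel : ((m':ℝ)+1) * (j.choose (m'+1)) = ((u':ℝ)+1) * (j.choose m') := by
          have h3 := Nat.choose_succ_right_eq j m'
          rw [show j - m' = u' + 1 from by omega] at h3
          have h4 := congrArg (Nat.cast : ℕ → ℝ) h3
          push_cast at h4 ⊢
          linarith [h4]
        have hkey := key_id (j.choose (m'+1)) (j.choose m') ((m':ℝ)+1) ((u':ℝ)+1) hrel
        have hu2R : (m':ℝ) + 2 ≤ (u':ℝ) := by exact_mod_cast hu2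
        have hsr : (s:ℝ) = (u':ℝ) - m' := by rw [hs_eq]; push_cast; ring
        have hjr : (j:ℝ) = (m':ℝ) + u' + 1 := by
          have hj2 : j = m' + u' + 1 := by omega
          rw [hj2]; push_cast; ring
        rw [abs_of_nonneg (show (0:ℝ) ≤ (s:ℝ) by rw [hsr]; linarith),
          abs_of_nonneg (show (0:ℝ) ≤ (s:ℝ) - 1 by rw [hsr]; linarith),
          abs_of_nonneg (show (0:ℝ) ≤ (s:ℝ) + 1 by rw [hsr]; linarith)]
        rw [hsr, hjr]
        field_simp
        push_cast
        linear_combination (p^(u'+1) * (1-p)^(m'+1)) * hkey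
    · obtain ⟨h1z, h2z⟩ := phi_succ_zero p h0
      rw [phi_ne p h0, h1z, h2z]
      ring

lemma hstep (p : ℝ) {j : ℕ} (hj : 1 ≤ j) {s : ℤ} (hs : s ≠ 0) :
    (|s| : ℝ)/((j:ℝ)+1) * phi p (j+1) s =
      p * (if s = 1 then 0 else (|s-1| : ℝ)/(j:ℝ) * phi p j (s-1)) +
      (1-p) * (if s = -1 then 0 else (|s+1| : ℝ)/(j:ℝ) * phi p j (s+1)) := by
  rcases lt_or_gt_of_ne hs with hneg | hpos
  · have h := hstep_pos (1-p) hj (s := -s) (by omega)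
    rw [show (1:ℝ) - (1-p) = p from by ring] at h
    rw [phi_symm p (j+1) s] at *
    rw [show -s - 1 = -(s+1) from by ring, show -s + 1 = -(s-1) from by ring,
      phi_symm p j (s+1), phi_symm p j (s-1)] at h
    rw [show ((-s : ℤ) : ℝ) = -(s:ℝ) from by push_cast; ring] at h
    rw [abs_neg] at h
    rw [show |(-(s:ℝ)) - 1| = |(s:ℝ) + 1| from by rw [← abs_neg]; ring_nf,
      show |(-(s:ℝ)) + 1| = |(s:ℝ) - 1| from by rw [← abs_neg]; ring_nf] at h
    simp only [show ((-s : ℤ) = 1) ↔ (s = -1) from by omega,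
      show ((-s : ℤ) = -1) ↔ (s = 1) from by omega] at h
    linarith [h]
  · exact hstep_pos p hj hpos

noncomputable section
def consPath (x : ℤ) (S : ℕ → ℤ) : ℕ → ℤ := fun i => if i = 0 then x else S (i-1)

end

lemma walkFn_zero (x : ℤ) (ε : ℕ → Bool) : walkFn x ε 0 = x := by simp [walkFn]

lemma walkFn_cons {n : ℕ} (x : ℤ) (b : Bool) (ε' : Fin n → Bool) :
    walkFn x (extendF false (Fin.cons b ε')) =
      consPath x (walkFn (x + stepVal b) (extendF false ε')) := by
  funext i
  cases i with
  | zero => simp [walkFn, consPath]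
  | succ i =>
    simp only [consPath, walkFn, Nat.add_sub_cancel]
    rw [Finset.sum_range_succ']
    have h0 : extendF false (Fin.cons b ε') 0 = b := by
      simp [extendF]
    have hsucc : ∀ k, extendF false (Fin.cons b ε') (k + 1) = extendF false ε' k := by
      intro k
      simp only [extendF]
      by_cases h : k < n
      · rw [dif_pos (by omega : k + 1 < n + 1), dif_pos h]
        exact Fin.cons_succ (α := fun _ => Bool) b ε' ⟨k, h⟩
      · rw [dif_neg (by omega), dif_neg h]
    simp only [hsucc, h0]
    simp only [if_neg (Nat.succ_ne_zero i), Nat.add_sub_cancel]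
    ring

lemma walkProb_succ (p : ℝ) (x : ℤ) (n : ℕ) (P : (ℕ → ℤ) → Prop) :
    walkProb p x (n+1) P =
      p * walkProb p (x+1) n (fun S => P (consPath x S)) +
      (1-p) * walkProb p (x-1) n (fun S => P (consPath x S)) := by
  classical
  unfold walkProb
  have hre := Fintype.sum_equiv (Fin.consEquiv (fun _ : Fin (n+1) => Bool))
    (fun q : Bool × (Fin n → Bool) =>
      if P (walkFn x (extendF false (Fin.cons (α := fun _ => Bool) q.1 q.2)))
      then ∏ k : Fin (n+1), wt p (Fin.cons (α := fun _ => Bool) q.1 q.2 k) else 0)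
    (fun ε : Fin (n+1) → Bool => if P (walkFn x (extendF false ε)) then ∏ k, wt p (ε k) else 0)
    (fun q => rfl)
  rw [← hre]
  rw [Fintype.sum_prod_type]
  rw [Fintype.sum_bool]
  rw [Finset.mul_sum, Finset.mul_sum, ← Finset.sum_add_distrib, ← Finset.sum_add_distrib]
  dsimp only
  refine Finset.sum_congr rfl fun ε' _ => ?_
  rw [walkFn_cons, walkFn_cons]
  simp only [Fin.prod_univ_succ]
  simp only [Fin.cons_zero, Fin.cons_succ, mul_ite, mul_zero, wt, stepVal]
  norm_num
  rw [show x + -1 = x - 1 from by ring]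

lemma walkProb_congr (p : ℝ) (x : ℤ) (n : ℕ) {P Q : (ℕ → ℤ) → Prop}
    (h : ∀ ε : Fin n → Bool, P (walkFn x (extendF false ε)) ↔ Q (walkFn x (extendF false ε))) :
    walkProb p x n P = walkProb p x n Q := by
  classical
  unfold walkProb
  exact Finset.sum_congr rfl fun ε _ => if_congr (h ε) rfl rfl

lemma walkProb_and_ne (p : ℝ) (y a : ℤ) (n : ℕ) (Q : (ℕ → ℤ) → Prop) :
    walkProb p y n (fun S => Q S ∧ S 0 ≠ a) = if y = a then 0 else walkProb p y n Q := by
  classical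
  by_cases hy : y = a
  · rw [if_pos hy]
    unfold walkProb
    apply Finset.sum_eq_zero
    intro ε _
    rw [if_neg]
    rintro ⟨-, h0⟩
    exact h0 (by rw [walkFn_zero, hy])
  · rw [if_neg hy]
    apply walkProb_congr
    intro ε
    rw [walkFn_zero]
    exact ⟨fun h => h.1, fun h => ⟨h, hy⟩⟩

lemma walkProb_endpoint (p : ℝ) : ∀ (j : ℕ) (x a : ℤ),
    walkProb p x j (fun S => S j = a) = phi p j (a - x) := by
  intro j
  induction j with
  | zero =>
    intro x a
    have h0 : walkProb p x 0 (fun S => S 0 = a) = if x = a then 1 else 0 := by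
      classical
      unfold walkProb
      rw [Fintype.sum_subsingleton _ (fun _ : Fin 0 => false)]
      simp [walkFn]
    rw [h0]
    by_cases hax : x = a
    · rw [if_pos hax, phi_eq p (m := 0) (u := 0) rfl (by omega)]
      simp
    · rw [if_neg hax, phi_ne p]
      rintro ⟨-, habs⟩
      rw [abs_le] at habs
      omega
  | succ n ih =>
    intro x a
    rw [walkProb_succ]
    have he : ∀ y : ℤ, walkProb p y n (fun S => consPath x S (n+1) = a)
        = walkProb p y n (fun S => S n = a) := by
      intro y
      apply walkProb_congr
      intro ε
      simp [consPath]
    rw [he, he, ih, ih, phi_pascal p n (a - x),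
      show a - (x+1) = a - x - 1 from by ring, show a - (x-1) = a - x + 1 from by ring]

lemma walkProb_hit (p : ℝ) : ∀ (j : ℕ), 1 ≤ j → ∀ (x a : ℤ), x ≠ a →
    walkProb p x j (fun S => S j = a ∧ ∀ i, 1 ≤ i → i < j → S i ≠ a) =
      (|((a - x : ℤ) : ℝ)|)/(j : ℝ) * phi p j (a - x) := by
  intro j
  induction j with
  | zero => omega
  | succ n ih =>
    intro _ x a hxa
    rcases Nat.eq_zero_or_pos n with hn | hn
    · subst hn
      have hE : walkProb p x (0+1) (fun S => S (0+1) = a ∧ ∀ i, 1 ≤ i → i < 0+1 → S i ≠ a)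
          = walkProb p x (0+1) (fun S => S (0+1) = a) := by
        apply walkProb_congr
        intro ε
        exact ⟨fun h => h.1, fun h => ⟨h, fun i h1 h2 => by omega⟩⟩
      rw [hE, walkProb_endpoint p]
      rcases phi_cases p (0+1) (a - x) with ⟨m, u, hmu, hs⟩ | h0
      · have habs : |((a - x : ℤ):ℝ)| = 1 := by
          have h2 : a - x = 1 ∨ a - x = -1 := by omega
          rcases h2 with h | h <;> rw [h] <;> norm_num
        rw [habs]
        norm_num
      · rw [phi_ne p h0]
        ring
    · have hy : ∀ y : ℤ, walkProb p y n
          (fun S => (fun T => T (n+1) = a ∧ ∀ i, 1 ≤ i → i < n+1 → T i ≠ a) (consPath x S))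
          = if y = a then 0
            else walkProb p y n (fun S => S n = a ∧ ∀ i, 1 ≤ i → i < n → S i ≠ a) := by
        intro y
        rw [← walkProb_and_ne p y a n]
        apply walkProb_congr
        intro ε
        set S := walkFn y (extendF false ε) with hS
        constructor
        · rintro ⟨h1, h2⟩
          refine ⟨⟨?_, ?_⟩, ?_⟩
          · simpa [consPath] using h1
          · intro i hi1 hi2
            have h3 := h2 (i+1) (by omega) (by omega)
            simpa [consPath] using h3
          · have h3 := h2 1 (by omega) (by omega)
            simpa [consPath] using h3
        · rintro ⟨⟨h1, h2⟩, h0⟩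
          constructor
          · simpa [consPath] using h1
          · intro i hi1 hi2
            rw [show consPath x S i = S (i-1) from if_neg (by omega)]
            rcases eq_or_lt_of_le hi1 with h | h
            · rw [show i - 1 = 0 from by omega]
              exact h0
            · exact h2 (i-1) (by omega) (by omega)
      rw [walkProb_succ]
      rw [hy, hy]
      have t1 : (if x + 1 = a then 0
          else walkProb p (x+1) n (fun S => S n = a ∧ ∀ i, 1 ≤ i → i < n → S i ≠ a))
          = if a - x = 1 then (0:ℝ)
            else |((a - x - 1 : ℤ):ℝ)|/(n : ℝ) * phi p n (a - x - 1) := by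
        by_cases h : a - x = 1
        · rw [if_pos (by omega), if_pos h]
        · rw [if_neg (by omega), if_neg h, ih hn (x+1) a (by omega),
            show a - (x+1) = a - x - 1 from by ring]
      have t2 : (if x - 1 = a then 0
          else walkProb p (x-1) n (fun S => S n = a ∧ ∀ i, 1 ≤ i → i < n → S i ≠ a))
          = if a - x = -1 then (0:ℝ)
            else |((a - x + 1 : ℤ):ℝ)|/(n : ℝ) * phi p n (a - x + 1) := by
        by_cases h : a - x = -1
        · rw [if_pos (by omega), if_pos h]
        · rw [if_neg (by omega), if_neg h, ih hn (x-1) a (by omega),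
            show a - (x-1) = a - x + 1 from by ring]
      rw [t1, t2]
      have hfin := hstep p hn (show a - x ≠ 0 from by omega)
      push_cast at hfin ⊢
      linarith [hfin]

/-- Hitting time theorem: for `x ≠ a` and `j ≥ 1`,
`P_x{τ_a = j} = (|x-a|/j) P_x{S(j) = a}`, with the explicit binomial formula. -/
theorem stmt3 (p : ℝ) (hp : p ∈ Set.Ioo (0:ℝ) 1) (x a : ℤ) (hxa : x ≠ a)
    (j : ℕ) (hj : 1 ≤ j) :
    walkProb p x j (fun S => S j = a ∧ ∀ i, 1 ≤ i → i < j → S i ≠ a) =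
      (|x - a| : ℝ)/(j : ℝ) * walkProb p x j (fun S => S j = a) ∧
    walkProb p x j (fun S => S j = a ∧ ∀ i, 1 ≤ i → i < j → S i ≠ a) =
      (|x - a| : ℝ)/(j : ℝ) *
        (if Even ((j : ℤ) + x - a) ∧ |x - a| ≤ (j : ℤ) then
          (j.choose (((j : ℤ) + x - a)/2).toNat : ℝ) *
            p ^ (((j : ℤ) + a - x)/2).toNat * (1-p) ^ (((j : ℤ) + x - a)/2).toNat
        else 0) := by
  have habs2 : (|x - a| : ℝ) = |((a - x : ℤ) : ℝ)| := by
    push_cast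
    rw [abs_sub_comm]
  have hhit := walkProb_hit p j hj x a hxa
  have hend := walkProb_endpoint p j x a
  have hphi : phi p j (a - x) =
      (if Even ((j : ℤ) + x - a) ∧ |x - a| ≤ (j : ℤ) then
          (j.choose (((j : ℤ) + x - a)/2).toNat : ℝ) *
            p ^ (((j : ℤ) + a - x)/2).toNat * (1-p) ^ (((j : ℤ) + x - a)/2).toNat
        else 0) := by
    rw [phi, show (j:ℤ) - (a - x) = (j:ℤ) + x - a from by ring,
      show (j:ℤ) + (a - x) = (j:ℤ) + a - x from by ring, abs_sub_comm a x]
  constructor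
  · rw [hhit, hend, habs2]
  · rw [hhit, habs2, hphi]
end

section
/- Let (S(i)) be the Bernoulli(p) random walk started at a, and τ_a = min{i ≥ 1 : S(i) = a} the first return time to a. Then for every j ≥ 1, P_a{τ_a = j} = (1/(j-1)) C(j, j/2) (pq)^{j/2} when j is even, and 0 when j is odd. -/
open Finset

open DyckStep

noncomputable section
/-- partial sum -/
def Fsum (ε : ℕ → Bool) (i : ℕ) : ℤ := ∑ k ∈ Finset.range i, stepVal (ε k)

lemma Fsum_succ (ε : ℕ → Bool) (i : ℕ) : Fsum ε (i+1) = Fsum ε i + stepVal (ε i) :=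
  Finset.sum_range_succ _ _

lemma stepVal_cases (b : Bool) : stepVal b = 1 ∨ stepVal b = -1 := by
  cases b <;> simp [stepVal]

lemma Fsum_parity (ε : ℕ → Bool) (i : ℕ) : (Fsum ε i - i) % 2 = 0 := by
  induction i with
  | zero => simp [Fsum]
  | succ i ih => rw [Fsum_succ]; rcases stepVal_cases (ε i) with h | h <;> rw [h] <;> push_cast <;> omega

def toStep (b : Bool) : DyckStep := if b then U else D
def sToBool : DyckStep → Bool | U => true | D => false

@[simp] lemma sToBool_toStep (b : Bool) : sToBool (toStep b) = b := by cases b <;> rfl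
@[simp] lemma toStep_sToBool (s : DyckStep) : toStep (sToBool s) = s := by cases s <;> rfl
@[simp] lemma stepVal_sToBool (s : DyckStep) : stepVal (sToBool s) = if s = U then 1 else -1 := by
  cases s <;> simp [sToBool, stepVal]

/-- list of steps `ε s, ε (s+1), ..., ε (s+i-1)` as DyckSteps -/
def stepsList (ε : ℕ → Bool) (s : ℕ) : ℕ → List DyckStep
  | 0 => []
  | i+1 => stepsList ε s i ++ [toStep (ε (s+i))]

@[simp] lemma stepsList_length (ε : ℕ → Bool) (s i : ℕ) : (stepsList ε s i).length = i := by
  induction i with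
  | zero => rfl
  | succ i ih => simp [stepsList, ih]

lemma stepsList_take (ε : ℕ → Bool) (s : ℕ) {i j : ℕ} (h : j ≤ i) :
    (stepsList ε s i).take j = stepsList ε s j := by
  induction i with
  | zero => interval_cases j; rfl
  | succ i ih =>
    rcases Nat.lt_or_ge j (i+1) with hj | hj
    · rw [stepsList, List.take_append_of_le_length (by simp; omega), ih (by omega)]
    · have : j = i + 1 := by omega
      subst this
      exact List.take_of_length_le (by simp)

lemma stepsList_count (ε : ℕ → Bool) (s i : ℕ) :
    ((stepsList ε s i).count U : ℤ) - (stepsList ε s i).count D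
      = Fsum ε (s+i) - Fsum ε s ∧
    ((stepsList ε s i).count U) + (stepsList ε s i).count D = i := by
  induction i with
  | zero => simp [stepsList, Fsum]
  | succ i ih =>
    obtain ⟨ih1, ih2⟩ := ih
    rw [stepsList]
    simp only [List.count_append, List.count_singleton]
    have : s + (i+1) = (s+i) + 1 := by ring
    rw [this, Fsum_succ]
    cases hb : ε (s+i) <;>
      simp [toStep, hb, stepVal] <;> push_cast <;> omega

lemma stepsList_get (ε : ℕ → Bool) (s i : ℕ) (k : ℕ) (hk : k < i) :
    (stepsList ε s i)[k]'(by simp; omega) = toStep (ε (s+k)) := by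
  induction i with
  | zero => omega
  | succ i ih =>
    rcases Nat.lt_or_ge k i with h | h
    · simp only [stepsList]
      rw [List.getElem_append_left (by simp; omega)]
      exact ih h
    · have : k = i := by omega
      subst this
      simp only [stepsList]
      rw [List.getElem_append_right (by simp)]
      simp
end

noncomputable section

section pos
variable (ε : ℕ → Bool) (N : ℕ)

lemma Fsum_one (h0 : ε 0 = true) : Fsum ε 1 = 1 := by
  simp [Fsum, Finset.sum_range_one, h0, stepVal]

lemma pos_of_nz (h0 : ε 0 = true) (hnz : ∀ i, 1 ≤ i → i < N → Fsum ε i ≠ 0) :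
    ∀ i, 1 ≤ i → i < N → 1 ≤ Fsum ε i := by
  intro i
  induction i with
  | zero => omega
  | succ i ih =>
    intro _ hiN
    rcases Nat.eq_zero_or_pos i with rfl | hi
    · rw [Fsum_one ε h0]
    · have h1 := ih hi (by omega)
      have h2 := hnz (i+1) (by omega) hiN
      rw [Fsum_succ] at *
      rcases stepVal_cases (ε i) with h | h <;> omega

lemma last_step (hN : 2 ≤ N) (h0 : ε 0 = true) (hz : Fsum ε N = 0)
    (hnz : ∀ i, 1 ≤ i → i < N → Fsum ε i ≠ 0) :
    Fsum ε (N-1) = 1 ∧ ε (N-1) = false := by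
  have hp := pos_of_nz ε N h0 hnz (N-1) (by omega) (by omega)
  have : N - 1 + 1 = N := by omega
  have hs : Fsum ε N = Fsum ε (N-1) + stepVal (ε (N-1)) := by
    rw [← this, Fsum_succ]; rw [this]
  cases hlast : ε (N-1) with
  | true => rw [hlast] at hs; simp [stepVal] at hs; omega
  | false => rw [hlast] at hs; simp [stepVal] at hs; constructor; omega; rfl
end pos

/-- the event: first return to start at time exactly 2n -/
def Econd (n : ℕ) (ε : Fin (2*n) → Bool) : Prop :=
  Fsum (extendF false ε) (2*n) = 0 ∧ ∀ i, 1 ≤ i → i < 2*n → Fsum (extendF false ε) i ≠ 0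

end

noncomputable section
open Classical

variable {n : ℕ}

/-- facts about a positive first-return path -/
lemma posFacts (hn : 1 ≤ n) (ε : Fin (2*n) → Bool) (hE : Econd n ε)
    (h0 : extendF false ε 0 = true) :
    ((stepsList (extendF false ε) 1 (2*n-2)).count U : ℤ)
        - (stepsList (extendF false ε) 1 (2*n-2)).count D = 0 ∧
    ∀ i, ((stepsList (extendF false ε) 1 (2*n-2)).take i).count D
        ≤ ((stepsList (extendF false ε) 1 (2*n-2)).take i).count U := by
  set ε' := extendF false ε with hε'
  obtain ⟨hz, hnz⟩ := hE
  have hF1 : Fsum ε' 1 = 1 := Fsum_one ε' h0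
  have hlast := last_step ε' (2*n) (by omega) h0 hz hnz
  have hpos := pos_of_nz ε' (2*n) h0 hnz
  have hc0 := stepsList_count ε' 1 (2*n-2)
  have h12 : 1 + (2*n-2) = 2*n-1 := by omega
  rw [h12, hlast.1, hF1] at hc0
  refine ⟨by omega, ?_⟩
  intro i
  rcases le_or_gt i (2*n-2) with hi | hi
  · rw [stepsList_take ε' 1 hi]
    have hc := stepsList_count ε' 1 i
    rcases Nat.eq_zero_or_pos i with rfl | hipos
    · simp [stepsList]
    · have := hpos (1+i) (by omega) (by omega)
      rw [hF1] at hc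
      omega
  · rw [List.take_of_length_le (by simp; omega)]
    omega

/-- Dyck word extracted from a positive first-return path -/
def dyckOf (hn : 1 ≤ n) (ε : Fin (2*n) → Bool) (hE : Econd n ε)
    (h0 : extendF false ε 0 = true) : DyckWord :=
  ⟨stepsList (extendF false ε) 1 (2*n-2),
   by have h := (posFacts hn ε hE h0).1; omega,
   (posFacts hn ε hE h0).2⟩

lemma dyckOf_semilength (hn : 1 ≤ n) (ε : Fin (2*n) → Bool) (hE : Econd n ε)
    (h0 : extendF false ε 0 = true) : (dyckOf hn ε hE h0).semilength = n - 1 := by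
  have h1 := (posFacts hn ε hE h0).1
  have hc := (stepsList_count (extendF false ε) 1 (2*n-2)).2
  show (stepsList (extendF false ε) 1 (2*n-2)).count U = n - 1
  omega

lemma dyckOf_toList (hn : 1 ≤ n) (ε : Fin (2*n) → Bool) (hE : Econd n ε)
    (h0 : extendF false ε 0 = true) :
    (dyckOf hn ε hE h0).toList = stepsList (extendF false ε) 1 (2*n-2) := rfl

end

noncomputable section
open Classical
variable {n : ℕ}

/-- the path associated to a Dyck word: up, the word, down -/
def pathOf (q : DyckWord) : ℕ → Bool := fun i =>
  if i = 0 then true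
  else if h : i - 1 < q.toList.length then sToBool (q.toList[i-1]) else false

lemma pathOf_zero (q : DyckWord) : pathOf q 0 = true := rfl

lemma pathOf_Fsum (q : DyckWord) : ∀ i ≤ q.toList.length,
    Fsum (pathOf q) (1+i)
      = 1 + ((q.toList.take i).count U : ℤ) - ((q.toList.take i).count D) := by
  intro i
  induction i with
  | zero =>
    intro _
    rw [show (1:ℕ) = 0 + 1 from rfl, Fsum_succ]
    simp [Fsum, pathOf, stepVal]
  | succ i ih =>
    intro hi
    have hi' : i < q.toList.length := by omega
    have : 1 + (i+1) = (1+i) + 1 := by omega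
    rw [this, Fsum_succ, ih (by omega)]
    have hp : pathOf q (1+i) = sToBool (q.toList[i]) := by
      unfold pathOf
      rw [if_neg (by omega)]
      have : 1 + i - 1 = i := by omega
      simp only [this]
      rw [dif_pos hi']
    rw [hp, ← List.take_concat_get' q.toList i hi']
    simp only [List.count_append, List.count_singleton]
    cases hs : q.toList[i] <;> simp [hs, stepVal, sToBool] <;> push_cast <;> ring

lemma pathOf_Econd (hn : 1 ≤ n) (q : DyckWord) (hq : q.semilength = n - 1) :
    Fsum (pathOf q) (2*n) = 0 ∧ ∀ i, 1 ≤ i → i < 2*n → Fsum (pathOf q) i ≠ 0 := by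
  have hL : q.toList.length = 2*n - 2 := by
    have := q.two_mul_semilength_eq_length
    omega
  have htot : Fsum (pathOf q) (2*n-1) = 1 := by
    have := pathOf_Fsum q q.toList.length le_rfl
    rw [List.take_of_length_le le_rfl, q.count_U_eq_count_D] at this
    rw [show 2*n-1 = 1 + q.toList.length by omega, this]
    ring
  constructor
  · have : 2*n = (2*n-1) + 1 := by omega
    rw [this, Fsum_succ, htot]
    have hp : pathOf q (2*n-1) = false := by
      unfold pathOf
      rw [if_neg (by omega), dif_neg (by omega)]
    rw [hp]; simp [stepVal]
  · intro i h1 h2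
    have hi' : i - 1 ≤ q.toList.length := by omega
    have := pathOf_Fsum q (i-1) hi'
    rw [show 1 + (i-1) = i by omega] at this
    rw [this]
    have := q.count_D_le_count_U (i-1)
    omega
end

noncomputable section
open Classical
variable {n : ℕ}

lemma extendF_pathOf (hn : 1 ≤ n) (q : DyckWord) (hq : q.semilength = n - 1) :
    extendF false (fun i : Fin (2*n) => pathOf q i) = pathOf q := by
  have hL : q.toList.length = 2*n - 2 := by
    have := q.two_mul_semilength_eq_length; omega
  funext k
  unfold extendF
  rcases Nat.lt_or_ge k (2*n) with h | h
  · rw [dif_pos h]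
  · rw [dif_neg (by omega)]
    unfold pathOf
    rw [if_neg (by omega), dif_neg (by omega)]

/-- the equivalence between positive first-return paths and Dyck words -/
def posEquiv (hn : 1 ≤ n) :
    {ε : Fin (2*n) → Bool // Econd n ε ∧ extendF false ε 0 = true}
      ≃ {q : DyckWord // q.semilength = n - 1} where
  toFun ε := ⟨dyckOf hn ε.1 ε.2.1 ε.2.2, dyckOf_semilength hn ε.1 ε.2.1 ε.2.2⟩
  invFun q := ⟨fun i => pathOf q.1 i, by
    have h := pathOf_Econd hn q.1 q.2
    rw [Econd, extendF_pathOf hn q.1 q.2]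
    refine ⟨⟨h.1, h.2⟩, ?_⟩
    rw [show ((0:ℕ)) = ((0:ℕ)) from rfl]
    exact pathOf_zero q.1⟩
  left_inv := by
    rintro ⟨ε, hE, h0⟩
    apply Subtype.ext
    funext i
    simp only
    set ε' := extendF false ε with hε'
    have hεv : ∀ k : Fin (2*n), ε' k = ε k := by
      intro k; rw [hε']; unfold extendF; rw [dif_pos k.2]
    have hlast := last_step ε' (2*n) (by omega) h0 hE.1 hE.2
    rw [← hεv i]
    unfold pathOf
    rcases Nat.eq_zero_or_pos i.1 with h | h
    · rw [if_pos h]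
      have : (i:ℕ) = 0 := h
      rw [show ε' i = ε' 0 by rw [this]]
      exact h0.symm
    · rw [if_neg (by omega)]
      rw [dyckOf_toList]
      rcases Nat.lt_or_ge (i.1 - 1) (2*n-2) with h2 | h2
      · rw [dif_pos (by rw [← hε']; simpa using h2)]
        have : (stepsList ε' 1 (2*n-2))[i.1-1]'(by simp; omega) = toStep (ε' (1 + (i.1-1))) :=
          stepsList_get ε' 1 (2*n-2) (i.1-1) h2
        simp only [← hε']
        rw [this, sToBool_toStep]
        congr 1
        omega
      · rw [dif_neg (by rw [← hε']; simpa using by omega)]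
        have hi : i.1 = 2*n - 1 := by have := i.2; omega
        rw [show ε' i = ε' (2*n-1) by rw [hi]]
        exact hlast.2.symm
  right_inv := by
    rintro ⟨q, hq⟩
    apply Subtype.ext
    simp only
    have hL : q.toList.length = 2*n - 2 := by
      have := q.two_mul_semilength_eq_length; omega
    apply DyckWord.ext
    rw [dyckOf_toList, extendF_pathOf hn q hq]
    apply List.ext_getElem
    · simp [hL]
    · intro k h1 h2
      rw [stepsList_get (pathOf q) 1 (2*n-2) k (by simpa using h1)]
      have : pathOf q (1+k) = sToBool (q.toList[k]'(by omega)) := by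
        unfold pathOf
        rw [if_neg (by omega)]
        have h3 : 1 + k - 1 = k := by omega
        simp only [h3]
        rw [dif_pos (by omega)]
      rw [this, toStep_sToBool]
end

noncomputable section
open Classical
variable {n : ℕ}

lemma stepVal_not (b : Bool) : stepVal (!b) = -stepVal b := by cases b <;> simp [stepVal]

lemma Fsum_not (ε : Fin (2*n) → Bool) (i : ℕ) (hi : i ≤ 2*n) :
    Fsum (extendF false (fun k => !ε k)) i = -Fsum (extendF false ε) i := by
  unfold Fsum
  rw [← Finset.sum_neg_distrib]
  apply Finset.sum_congr rfl
  intro k hk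
  have hk' : k < 2*n := by have := Finset.mem_range.1 hk; omega
  unfold extendF
  rw [dif_pos hk', dif_pos hk', stepVal_not]

lemma Econd_not (ε : Fin (2*n) → Bool) (h : Econd n ε) : Econd n (fun k => !ε k) := by
  obtain ⟨h1, h2⟩ := h
  constructor
  · rw [Fsum_not ε (2*n) le_rfl, h1, neg_zero]
  · intro i hi1 hi2
    rw [Fsum_not ε i (by omega)]
    simpa using h2 i hi1 hi2

lemma extendF_zero_val (hn : 1 ≤ n) (ε : Fin (2*n) → Bool) :
    extendF false ε 0 = ε ⟨0, by omega⟩ := by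
  unfold extendF; rw [dif_pos (by omega)]

lemma Econd_card (hn : 1 ≤ n) :
    (univ.filter (fun ε : Fin (2*n) → Bool => Econd n ε)).card = 2 * catalan (n-1) := by
  classical
  set s := univ.filter (fun ε : Fin (2*n) → Bool => Econd n ε) with hs
  have hsplit := Finset.card_filter_add_card_filter_not
    (s := s) (p := fun ε => extendF false ε 0 = true)
  have hbij : (s.filter (fun ε => extendF false ε 0 = true)).card
      = (s.filter (fun ε => ¬ extendF false ε 0 = true)).card := by
    apply Finset.card_bij' (fun ε _ => fun k => !ε k) (fun ε _ => fun k => !ε k)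
    · intro ε hε
      simp only [hs, Finset.mem_filter, Finset.mem_univ, true_and] at hε ⊢
      refine ⟨Econd_not ε hε.1, ?_⟩
      rw [extendF_zero_val hn] at hε ⊢
      simp [hε.2]
    · intro ε hε
      simp only [hs, Finset.mem_filter, Finset.mem_univ, true_and] at hε ⊢
      refine ⟨Econd_not ε hε.1, ?_⟩
      rw [extendF_zero_val hn] at hε ⊢
      simp at hε ⊢
      simp [hε.2]
    · intro ε _; funext k; simp
    · intro ε _; funext k; simp
  have hcard : (s.filter (fun ε => extendF false ε 0 = true)).card = catalan (n-1) := by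
    have h1 : s.filter (fun ε => extendF false ε 0 = true)
        = univ.filter (fun ε => Econd n ε ∧ extendF false ε 0 = true) := by
      rw [hs, Finset.filter_filter]
    rw [h1]
    have h2 : Fintype.card {ε : Fin (2*n) → Bool // Econd n ε ∧ extendF false ε 0 = true}
        = catalan (n-1) := by
      rw [Fintype.card_congr (posEquiv hn)]
      exact DyckWord.card_dyckWord_semilength_eq_catalan (n-1)
    rw [← h2, Fintype.card_subtype]
  omega
end


section prob
open Classical
variable {N : ℕ} (p : ℝ)

lemma prod_wt (ε : Fin N → Bool) :
    ∏ k, wt p (ε k) = p ^ (univ.filter (fun k => ε k = true)).card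
      * (1-p) ^ (N - (univ.filter (fun k => ε k = true)).card) := by
  rw [← Finset.prod_filter_mul_prod_filter_not univ (fun k => ε k = true)]
  have h1 : ∀ k ∈ univ.filter (fun k => ε k = true), wt p (ε k) = p := by
    intro k hk; simp only [Finset.mem_filter] at hk; simp [wt, hk.2]
  have h2 : ∀ k ∈ univ.filter (fun k => ¬ ε k = true), wt p (ε k) = 1 - p := by
    intro k hk; simp only [Finset.mem_filter] at hk
    have : ε k = false := by simpa using hk.2
    simp [wt, this]
  rw [Finset.prod_congr rfl h1, Finset.prod_congr rfl h2,
    Finset.prod_const, Finset.prod_const]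
  congr 1
  rw [Finset.filter_not, Finset.card_sdiff_of_subset (Finset.filter_subset _ _), Finset.card_univ,
    Fintype.card_fin]

lemma Fsum_card (ε : Fin N → Bool) :
    Fsum (extendF false ε) N
      = 2 * ((univ.filter (fun k => ε k = true)).card : ℤ) - N := by
  unfold Fsum
  rw [← Fin.sum_univ_eq_sum_range]
  have h : ∀ k : Fin N, stepVal (extendF false ε k)
      = 2 * (if ε k = true then (1:ℤ) else 0) - 1 := by
    intro k
    unfold extendF
    rw [dif_pos k.2]
    have : (⟨(k:ℕ), k.2⟩ : Fin N) = k := rfl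
    rw [this]
    cases h : ε k <;> simp [stepVal, h]
  rw [Finset.sum_congr rfl (fun k _ => h k)]
  rw [Finset.sum_sub_distrib, Finset.sum_const, ← Finset.mul_sum, Finset.sum_boole]
  simp [Finset.card_univ]
end prob


theorem natid (n : ℕ) (hn : 1 ≤ n) : (2*n).choose n = (2*n-1) * (2 * catalan (n-1)) := by
  obtain ⟨m, rfl⟩ := Nat.exists_eq_add_of_le hn
  have h1 := Nat.succ_mul_centralBinom_succ m
  have h2 := succ_mul_catalan_eq_centralBinom m
  have key : (m+1) * Nat.centralBinom (m+1) = (m+1) * ((2*m+1) * (2 * catalan m)) := by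
    rw [h1, ← h2]; ring
  have h3 := Nat.eq_of_mul_eq_mul_left (Nat.succ_pos m) key
  have hc : Nat.centralBinom (m+1) = (2*(1+m)).choose (1+m) := by
    unfold Nat.centralBinom; rw [Nat.add_comm 1 m]
  rw [← hc, h3]
  have h4 : 1 + m - 1 = m := by omega
  rw [h4]
  congr 1
  omega


/-- First return time to `a`: for `j ≥ 1`,
`P_a{τ_a = j} = (1/(j-1)) C(j, j/2) (pq)^{j/2}` for even `j`, and `0` for odd `j`. -/
theorem stmt4 (p : ℝ) (hp : p ∈ Set.Ioo (0:ℝ) 1) (a : ℤ) (j : ℕ) (hj : 1 ≤ j) :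
    walkProb p a j (fun S => S j = a ∧ ∀ i, 1 ≤ i → i < j → S i ≠ a) =
      if Even j then (1/((j : ℝ) - 1)) * (j.choose (j/2) : ℝ) * (p*(1-p))^(j/2)
      else 0 := by
  classical
  have hwalk : ∀ (ε : Fin j → Bool) (i : ℕ),
      walkFn a (extendF false ε) i = a + Fsum (extendF false ε) i := fun _ _ => rfl
  by_cases hEv : Even j
  · rw [if_pos hEv]
    obtain ⟨n, hn2⟩ : ∃ n, j = 2*n := by
      obtain ⟨m, hm⟩ := hEv; exact ⟨m, by omega⟩
    subst hn2
    have hn : 1 ≤ n := by omega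
    unfold walkProb
    beta_reduce
    have hiff : ∀ ε : Fin (2*n) → Bool, (walkFn a (extendF false ε) (2*n) = a ∧
          ∀ i, 1 ≤ i → i < 2*n → walkFn a (extendF false ε) i ≠ a) ↔ Econd n ε := by
      intro ε
      unfold Econd
      constructor
      · rintro ⟨h1, h2⟩
        refine ⟨?_, fun i hi1 hi2 => ?_⟩
        · have := hwalk ε (2*n); rw [this] at h1; omega
        · have h3 := h2 i hi1 hi2
          rw [hwalk ε i] at h3
          intro hcon; apply h3; omega
      · rintro ⟨h1, h2⟩
        refine ⟨?_, fun i hi1 hi2 => ?_⟩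
        · rw [hwalk]; omega
        · rw [hwalk]
          have := h2 i hi1 hi2
          intro hcon; apply this; omega
    have hval : ∀ ε : Fin (2*n) → Bool, Econd n ε → ∏ k, wt p (ε k) = (p*(1-p))^n := by
      intro ε hE
      have ht : (univ.filter (fun k => ε k = true)).card = n := by
        have := Fsum_card ε
        rw [hE.1] at this
        have h2n : (2*n : ℤ) = ((2*n : ℕ) : ℤ) := by push_cast; ring
        omega
      rw [prod_wt p ε, ht, mul_pow]
      congr 2
      omega
    trans (∑ ε : Fin (2*n) → Bool, if Econd n ε then (p*(1-p))^n else 0)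
    · refine Finset.sum_congr rfl fun ε _ => ?_
      split_ifs with h1 h2 h2
      · exact hval ε h2
      · exact absurd ((hiff ε).1 h1) h2
      · exact absurd ((hiff ε).2 h2) h1
      · rfl
    rw [← Finset.sum_filter, Finset.sum_const, Econd_card hn, nsmul_eq_mul]
    have hch : ((2*n).choose (2*n/2)) = (2*n-1) * (2 * catalan (n-1)) := by
      rw [Nat.mul_div_cancel_left n (by norm_num)]
      exact natid n hn
    rw [hch]
    have hne : ((2*n : ℕ) : ℝ) - 1 ≠ 0 := by
      have h1 : ((2*n : ℕ) : ℝ) ≠ 1 := by exact_mod_cast (by omega : 2*n ≠ 1)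
      exact sub_ne_zero.mpr h1
    have hcast : (((2*n-1) * (2 * catalan (n-1)) : ℕ) : ℝ)
        = (((2*n : ℕ):ℝ) - 1) * ((2 * catalan (n-1) : ℕ) : ℝ) := by
      push_cast [Nat.cast_sub (by omega : 1 ≤ 2*n)]
      ring
    rw [hcast, Nat.mul_div_cancel_left n (by norm_num), one_div, inv_mul_cancel_left₀ hne]
  · rw [if_neg hEv]
    unfold walkProb
    beta_reduce
    apply Finset.sum_eq_zero
    intro ε _
    rw [if_neg]
    rintro ⟨h1, -⟩
    rw [hwalk ε j] at h1
    have h0 : Fsum (extendF false ε) j = 0 := by omega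
    have := Fsum_parity (extendF false ε) j
    rw [h0] at this
    apply hEv
    rw [Nat.even_iff]
    omega
end

section
/- Let (S(i)) be the symmetric simple random walk on ℤ (p = q = 1/2) started at 0 and T_n = #{1 ≤ i ≤ n : S(i) = 0}. Then for even n and 0 ≤ k ≤ n/2, P_0{T_n = k} = C(n-k, n/2) / 2^{n-k}, and for odd n, P_0{T_n = k} = C(n-k-1, (n-1)/2) / 2^{n-k-1}. -/
open Finset

/-- Local time at `0`: number of times `i ∈ {1,...,n}` with `S i = 0`. -/
def localCount (n : ℕ) (S : ℕ → ℤ) : ℕ :=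
  ((Finset.Icc 1 n).filter (fun i => S i = 0)).card


open Classical in
noncomputable def trues {n : ℕ} (ε : Fin n → Bool) : ℕ := ∑ i, if ε i then 1 else 0

open Classical in
noncomputable def cnt (n k j : ℕ) : ℕ :=
  (Finset.univ.filter fun ε : Fin n → Bool =>
    localCount n (walkFn 0 (extendF false ε)) = k ∧ trues ε = j).card

lemma extendF_snoc_lt {n : ℕ} (ε : Fin n → Bool) (b : Bool) (i : ℕ) (h : i < n) :
    extendF false (Fin.snoc ε b) i = extendF false ε i := by
  have h' : i < n + 1 := Nat.lt_succ_of_lt h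
  simp only [extendF, dif_pos h, dif_pos h']
  have : (⟨i, h'⟩ : Fin (n+1)) = Fin.castSucc ⟨i, h⟩ := rfl
  rw [this, Fin.snoc_castSucc]

lemma walk_snoc_eq {n : ℕ} (ε : Fin n → Bool) (b : Bool) (i : ℕ) (h : i ≤ n) :
    walkFn 0 (extendF false (Fin.snoc ε b)) i = walkFn 0 (extendF false ε) i := by
  unfold walkFn
  congr 1
  refine Finset.sum_congr rfl fun k hk => ?_
  rw [extendF_snoc_lt ε b k (lt_of_lt_of_le (Finset.mem_range.mp hk) h)]

lemma endpoint_eq {n : ℕ} (ε : Fin n → Bool) :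
    walkFn 0 (extendF false ε) n = 2 * (trues ε : ℤ) - n := by
  classical
  unfold walkFn trues
  rw [zero_add]
  rw [← Fin.sum_univ_eq_sum_range (fun k => stepVal (extendF false ε k)) n]
  have : ∀ i : Fin n, stepVal (extendF false ε i) = 2 * (if ε i then (1:ℤ) else 0) - 1 := by
    intro i
    simp only [extendF, stepVal, Fin.is_lt, dif_pos, Fin.eta]
    cases ε i <;> simp
  rw [Finset.sum_congr rfl fun i _ => this i]
  push_cast
  rw [Finset.sum_sub_distrib, ← Finset.mul_sum]
  simp [Finset.sum_ite_eq, mul_comm]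

lemma localCount_succ (n : ℕ) (S : ℕ → ℤ) :
    localCount (n+1) S = localCount n S + (if S (n+1) = 0 then 1 else 0) := by
  classical
  unfold localCount
  rw [show Finset.Icc 1 (n+1) = insert (n+1) (Finset.Icc 1 n) by
    ext i; simp [Finset.mem_Icc, Finset.mem_insert]; omega]
  rw [Finset.filter_insert]
  split_ifs with h
  · rw [Finset.card_insert_of_notMem (by simp [Finset.mem_Icc])]
  · rfl

lemma trues_snoc {n : ℕ} (ε : Fin n → Bool) (b : Bool) :
    trues (Fin.snoc ε b) = trues ε + (if b then 1 else 0) := by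
  classical
  unfold trues
  rw [Fin.sum_univ_castSucc]
  simp

lemma trues_le {n : ℕ} (ε : Fin n → Bool) : trues ε ≤ n := by
  classical
  unfold trues
  calc ∑ i : Fin n, (if ε i then 1 else 0) ≤ ∑ _i : Fin n, 1 :=
        Finset.sum_le_sum (fun i _ => by split <;> omega)
    _ = n := by simp

lemma localCount_snoc {n : ℕ} (ε : Fin n → Bool) (b : Bool) :
    localCount (n+1) (walkFn 0 (extendF false (Fin.snoc ε b)))
      = localCount n (walkFn 0 (extendF false ε))
        + (if 2 * (trues ε + (if b then 1 else 0)) = n + 1 then 1 else 0) := by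
  classical
  rw [localCount_succ]
  congr 1
  · unfold localCount
    congr 1
    apply Finset.filter_congr
    intro i hi
    rw [walk_snoc_eq ε b i (Finset.mem_Icc.mp hi).2]
  · rw [endpoint_eq (Fin.snoc ε b), trues_snoc]
    by_cases h : 2 * (trues ε + (if b then 1 else 0)) = n + 1
    · rw [if_pos h, if_pos (by omega)]
    · rw [if_neg h, if_neg (by intro hc; exact h (by omega))]

lemma cnt_succ (n k j : ℕ) : cnt (n+1) k j =
    (Finset.univ.filter fun ε : Fin n → Bool =>
      localCount n (walkFn 0 (extendF false ε)) + (if 2*j = n+1 then 1 else 0) = k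
      ∧ trues ε + 1 = j).card
    + (Finset.univ.filter fun ε : Fin n → Bool =>
      localCount n (walkFn 0 (extendF false ε)) + (if 2*j = n+1 then 1 else 0) = k
      ∧ trues ε = j).card := by
  classical
  unfold cnt
  rw [Finset.card_filter, Finset.card_filter, Finset.card_filter]
  rw [(Fintype.sum_equiv (Fin.snocEquiv fun _ => Bool)
    (fun p => if localCount (n+1) (walkFn 0 (extendF false (Fin.snoc p.2 p.1))) = k
        ∧ trues (Fin.snoc p.2 p.1) = j then 1 else 0) _ (fun p => rfl)).symm]
  rw [Fintype.sum_prod_type, Fintype.sum_bool]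
  congr 1
  · -- b = true
    refine Finset.sum_congr rfl fun ε _ => ?_
    rw [localCount_snoc, trues_snoc]
    norm_num
    by_cases ht : trues ε + 1 = j
    · rw [ht]
    · rw [if_neg (fun hc => ht hc.2), if_neg (fun hc => ht hc.2)]
  · -- b = false
    refine Finset.sum_congr rfl fun ε _ => ?_
    rw [localCount_snoc, trues_snoc]
    norm_num
    by_cases ht : trues ε = j
    · rw [ht]
    · rw [if_neg (fun hc => ht hc.2), if_neg (fun hc => ht hc.2)]

def G (n k j : ℕ) : ℤ :=
  if n = 0 then (if k = 0 ∧ j = 0 then 1 else 0)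
  else if 2*k > n then 0
  else 2^k * (((n-k-1).choose (max j (n-j) - 1) : ℤ) - ((n-k-1).choose (max j (n-j)) : ℤ))

lemma GA (n k : ℕ) : G (n+1) k 0 = G n k 0 := by
  simp only [G]
  rw [if_neg (Nat.succ_ne_zero n)]
  by_cases hn : n = 0
  · subst hn
    by_cases hk : k = 0
    · subst hk; norm_num
    · rw [if_pos (by omega), if_pos rfl, if_neg (by tauto)]
  · rw [if_neg hn]
    by_cases h1 : 2*k > n+1
    · rw [if_pos h1, if_pos (by omega)]
    · rw [if_neg h1]
      by_cases h2 : 2*k > n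
      · rw [if_pos h2]
        rw [Nat.choose_eq_zero_of_lt (show n+1-k-1 < max 0 (n+1-0) - 1 by omega),
            Nat.choose_eq_zero_of_lt (show n+1-k-1 < max 0 (n+1-0) by omega)]
        norm_num
      · rw [if_neg h2]
        rw [show max 0 (n+1-0) = n+1 by omega, show max 0 (n-0) = n by omega]
        by_cases hk : k = 0
        · subst hk
          rw [show n+1-0-1 = n by omega, show n-0-1 = n-1 by omega,
              show n+1-1 = n from rfl]
          rw [Nat.choose_self, Nat.choose_eq_zero_of_lt (by omega),
              Nat.choose_eq_zero_of_lt (show n-1 < n by omega)]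
          obtain ⟨m, rfl⟩ : ∃ m, n = m+1 := ⟨n-1, by omega⟩
          rw [show m+1-1 = m from rfl, Nat.choose_self]
        · rw [Nat.choose_eq_zero_of_lt (show n+1-k-1 < n+1-1 by omega),
              Nat.choose_eq_zero_of_lt (show n+1-k-1 < n+1 by omega),
              Nat.choose_eq_zero_of_lt (show n-k-1 < n-1 by omega),
              Nat.choose_eq_zero_of_lt (show n-k-1 < n by omega)]

lemma GB (j k : ℕ) : G (2*j+2) k (j+1) =
    if k = 0 then 0 else G (2*j+1) (k-1) j + G (2*j+1) (k-1) (j+1) := by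
  simp only [G]
  rw [if_neg (show ¬(2*j+2 = 0) by omega)]
  rw [show max (j+1) (2*j+2-(j+1)) = j+1 by omega]
  by_cases hk : k = 0
  · subst hk
    rw [if_neg (show ¬(2*0 > 2*j+2) by omega), if_pos rfl]
    rw [show 2*j+2-0-1 = 2*j+1 by omega, show j+1-1 = j from rfl]
    rw [show (2*j+1).choose (j+1) = (2*j+1).choose j by
      rw [show j+1 = 2*j+1-j by omega]; exact Nat.choose_symm (by omega)]
    ring
  · obtain ⟨k', rfl⟩ : ∃ k', k = k'+1 := ⟨k-1, by omega⟩
    rw [if_neg hk]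
    simp only [Nat.add_sub_cancel]
    rw [if_neg (show ¬(2*j+1 = 0) by omega), if_neg (show ¬(2*j+1 = 0) by omega)]
    rw [show max j (2*j+1-j) = j+1 by omega,
        show max (j+1) (2*j+1-(j+1)) = j+1 by omega,
        show j+1-1 = j from rfl]
    by_cases hg : 2*(k'+1) > 2*j+2
    · rw [if_pos hg, if_pos (by omega)]; ring
    · rw [if_neg hg, if_neg (by omega)]
      rw [show 2*j+2-(k'+1)-1 = 2*j+1-k'-1 by omega, pow_succ]
      ring

lemma GC (n k j : ℕ) (hmid : 2*(j+1) ≠ n+1) :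
    G (n+1) k (j+1) = G n k j + G n k (j+1) := by
  simp only [G]
  rw [if_neg (Nat.succ_ne_zero n)]
  by_cases hn : n = 0
  · subst hn
    rw [if_pos rfl, if_pos rfl]
    by_cases hk : k = 0
    · subst hk
      rw [if_neg (show ¬(2*0 > 0+1) by omega)]
      rw [show max (j+1) (0+1-(j+1)) = j+1 by omega,
          show 0+1-0-1 = 0 by omega, show j+1-1 = j from rfl]
      by_cases hj : j = 0
      · subst hj; norm_num
      · rw [Nat.choose_eq_zero_of_lt (show 0 < j by omega),
            Nat.choose_eq_zero_of_lt (show 0 < j+1 by omega)]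
        rw [if_neg (by tauto), if_neg (by tauto)]
        norm_num
    · rw [if_pos (by omega), if_neg (by tauto), if_neg (by tauto)]; norm_num
  · rw [if_neg hn, if_neg hn]
    by_cases h1 : 2*k > n+1
    · rw [if_pos h1, if_pos (by omega), if_pos (by omega)]; norm_num
    · rw [if_neg h1]
      by_cases h2 : 2*k > n
      · rw [if_pos h2, if_pos h2]
        rw [Nat.choose_eq_zero_of_lt
              (show n+1-k-1 < max (j+1) (n+1-(j+1)) - 1 by omega),
            Nat.choose_eq_zero_of_lt
              (show n+1-k-1 < max (j+1) (n+1-(j+1)) by omega)]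
        norm_num
      · rw [if_neg h2, if_neg h2]
        rw [show n+1-k-1 = (n-k-1)+1 by omega]
        rcases lt_trichotomy (2*j+1) n with hc | hc | hc
        · rw [show max (j+1) (n+1-(j+1)) = n-j by omega,
              show max j (n-j) = n-j by omega,
              show max (j+1) (n-(j+1)) = n-j-1 by omega]
          obtain ⟨m, hm⟩ : ∃ m, n - j = m+2 := ⟨n-j-2, by omega⟩
          rw [hm, show m+2-1 = m+1 from rfl, show m+1-1 = m from rfl,
              show (m:ℕ)+2 = (m+1)+1 from rfl]
          rw [Nat.choose_succ_succ (n-k-1) m, Nat.choose_succ_succ (n-k-1) (m+1)]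
          push_cast; ring
        · exact absurd (by omega) hmid
        · rw [show max (j+1) (n+1-(j+1)) = j+1 by omega,
              show max j (n-j) = j by omega,
              show max (j+1) (n-(j+1)) = j+1 by omega]
          obtain ⟨m, hm⟩ : ∃ m, j = m+1 := ⟨j-1, by omega⟩
          rw [hm, show m+1+1-1 = m+1 from rfl, show m+1-1 = m from rfl]
          rw [Nat.choose_succ_succ (n-k-1) m, Nat.choose_succ_succ (n-k-1) (m+1)]
          push_cast; ring

lemma cnt_zero (k j : ℕ) : cnt 0 k j = if k = 0 ∧ j = 0 then 1 else 0 := by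
  classical
  have h1 : ∀ ε : Fin 0 → Bool, localCount 0 (walkFn 0 (extendF false ε)) = 0 := by
    intro ε; unfold localCount; simp
  have h2 : ∀ ε : Fin 0 → Bool, trues ε = 0 := by intro ε; simp [trues]
  unfold cnt
  by_cases h : k = 0 ∧ j = 0
  · rw [if_pos h, Finset.filter_true_of_mem
      (fun ε _ => ⟨(h1 ε).trans h.1.symm, (h2 ε).trans h.2.symm⟩)]
    simp
  · rw [if_neg h, Finset.filter_false_of_mem
      (fun ε _ hc => h ⟨((h1 ε).symm.trans hc.1).symm, ((h2 ε).symm.trans hc.2).symm⟩),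
      Finset.card_empty]

lemma cnt_succ_zero (n k : ℕ) : cnt (n+1) k 0 = cnt n k 0 := by
  classical
  rw [cnt_succ]
  rw [Finset.filter_false_of_mem (fun (ε : Fin n → Bool) _ hc => by
    exact absurd hc.2 (by omega))]
  rw [Finset.card_empty, zero_add]
  rw [Finset.filter_congr (fun (ε : Fin n → Bool) _ => by
    rw [if_neg (show ¬(2*0 = n+1) by omega), add_zero])]
  rfl

lemma cnt_succ_mid (n k j : ℕ) (h : 2*(j+1) = n+1) :
    cnt (n+1) k (j+1) = if k = 0 then 0
      else cnt n (k-1) j + cnt n (k-1) (j+1) := by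
  classical
  rw [cnt_succ]
  rcases Nat.eq_zero_or_pos k with hk | hk
  · subst hk
    rw [if_pos rfl]
    rw [Finset.filter_false_of_mem (fun (ε : Fin n → Bool) _ hc => by
      have h2 := hc.1; rw [if_pos h] at h2; omega)]
    rw [Finset.filter_false_of_mem (fun (ε : Fin n → Bool) _ hc => by
      have h2 := hc.1; rw [if_pos h] at h2; omega)]
    simp
  · rw [if_neg (show ¬(k = 0) by omega)]
    congr 1
    · rw [Finset.filter_congr
        (q := fun ε : Fin n → Bool =>
          localCount n (walkFn 0 (extendF false ε)) = k - 1 ∧ trues ε = j)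
        (fun (ε : Fin n → Bool) _ => by
          rw [if_pos h]
          constructor
          · rintro ⟨a, b⟩; exact ⟨by omega, by omega⟩
          · rintro ⟨a, b⟩; exact ⟨by omega, by omega⟩)]
      rfl
    · rw [Finset.filter_congr
        (q := fun ε : Fin n → Bool =>
          localCount n (walkFn 0 (extendF false ε)) = k - 1 ∧ trues ε = j + 1)
        (fun (ε : Fin n → Bool) _ => by
          rw [if_pos h]
          constructor
          · rintro ⟨a, b⟩; exact ⟨by omega, b⟩
          · rintro ⟨a, b⟩; exact ⟨by omega, b⟩)]
      rfl

lemma cnt_succ_off (n k j : ℕ) (h : 2*(j+1) ≠ n+1) :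
    cnt (n+1) k (j+1) = cnt n k j + cnt n k (j+1) := by
  classical
  rw [cnt_succ]
  congr 1
  · rw [Finset.filter_congr
      (q := fun ε : Fin n → Bool =>
        localCount n (walkFn 0 (extendF false ε)) = k ∧ trues ε = j)
      (fun (ε : Fin n → Bool) _ => by
        rw [if_neg h, add_zero]
        constructor
        · rintro ⟨a, b⟩; exact ⟨a, by omega⟩
        · rintro ⟨a, b⟩; exact ⟨a, by omega⟩)]
    rfl
  · rw [Finset.filter_congr
      (q := fun ε : Fin n → Bool =>
        localCount n (walkFn 0 (extendF false ε)) = k ∧ trues ε = j + 1)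
      (fun (ε : Fin n → Bool) _ => by
        rw [if_neg h, add_zero])]
    rfl

theorem cnt_eq_G : ∀ n k j, (cnt n k j : ℤ) = G n k j := by
  intro n
  induction n with
  | zero =>
    intro k j
    rw [cnt_zero]
    simp only [G, if_pos rfl]
    split_ifs <;> simp
  | succ n ih =>
    intro k j
    cases j with
    | zero => rw [cnt_succ_zero, ih, GA]
    | succ j =>
      by_cases h : 2*(j+1) = n+1
      · obtain rfl : n = 2*j+1 := by omega
        rw [cnt_succ_mid _ _ _ h, show 2*j+1+1 = 2*j+2 from rfl, GB]
        split_ifs with hk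
        · simp
        · push_cast [ih]; ring
      · rw [cnt_succ_off _ _ _ h, GC _ _ _ h]
        push_cast [ih]; ring


lemma card_eq_sum_cnt (n k : ℕ) :
    (Finset.univ.filter fun ε : Fin n → Bool =>
      localCount n (walkFn 0 (extendF false ε)) = k).card
    = ∑ j ∈ Finset.range (n+1), cnt n k j := by
  classical
  rw [Finset.card_eq_sum_card_fiberwise (f := fun ε => trues ε)
      (t := Finset.range (n+1))
      (fun ε _ => Finset.mem_range.mpr (Nat.lt_succ_of_le (trues_le ε)))]
  refine Finset.sum_congr rfl fun j _ => ?_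
  rw [Finset.filter_filter]
  rfl

lemma sum_G_gen (n k : ℕ) (hn : 1 ≤ n) (hk : 2*k ≤ n) :
    ∑ j ∈ Finset.range (n+1), G n k j
      = 2^k * (((n-k-1).choose (n - (n+1)/2) : ℤ)
              + ((n-k-1).choose ((n+1)/2 - 1) : ℤ)) := by
  set F : ℕ → ℤ := fun a => ((n-k-1).choose a : ℤ) with hF
  set c : ℕ := (n+1)/2 with hc
  have hc1 : 1 ≤ c := by omega
  have hcn : c ≤ n + 1 := by omega
  have hFn : F n = 0 := by
    simp only [hF]
    rw [Nat.choose_eq_zero_of_lt (by omega)]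
    rfl
  have hG : ∀ j, G n k j = 2^k * (F (max j (n-j) - 1) - F (max j (n-j))) := by
    intro j
    rw [G, if_neg (by omega), if_neg (by omega)]
  rw [Finset.range_eq_Ico, ← Finset.sum_Ico_consecutive _ (Nat.zero_le c) hcn]
  have e1 : ∑ j ∈ Finset.Ico 0 c, G n k j = 2^k * (F (n-c) - F n) := by
    rw [← Finset.range_eq_Ico]
    have : ∀ j ∈ Finset.range c, G n k j = 2^k * (F (n-(j+1)) - F (n-j)) := by
      intro j hj
      rw [hG j, show max j (n-j) = n-j by
        have := Finset.mem_range.mp hj; omega,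
        show n-j-1 = n-(j+1) by omega]
    rw [Finset.sum_congr rfl this, ← Finset.mul_sum]
    congr 1
    have := Finset.sum_range_sub (fun i => F (n-i)) c
    simpa using this
  have e2 : ∑ j ∈ Finset.Ico c (n+1), G n k j = 2^k * (F (c-1) - F n) := by
    rw [Finset.sum_Ico_eq_sum_range]
    have : ∀ i ∈ Finset.range (n+1-c), G n k (c+i)
        = 2^k * (F (c-1+i) - F (c-1+(i+1))) := by
      intro i hi
      rw [hG (c+i), show max (c+i) (n-(c+i)) = c+i by omega,
        show c+i-1 = c-1+i by omega, show c+i = c-1+(i+1) by omega]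
    rw [Finset.sum_congr rfl this, ← Finset.mul_sum]
    congr 1
    have := Finset.sum_range_sub' (fun i => F (c-1+i)) (n+1-c)
    rw [this, show c-1+(n+1-c) = n by omega, show c-1+0 = c-1 by omega]
  rw [e1, e2, hFn]
  ring

lemma sum_G_even (m k : ℕ) (hm : 1 ≤ m) (hk : k ≤ m) :
    ∑ j ∈ Finset.range (2*m+1), G (2*m) k j = 2^k * ((2*m-k).choose m : ℤ) := by
  have := sum_G_gen (2*m) k (by omega) (by omega)
  rw [show 2*m+1 = (2*m)+1 from rfl] at this
  rw [this, show 2*m - (2*m+1)/2 = m by omega, show (2*m+1)/2 - 1 = m - 1 by omega]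
  obtain ⟨m', rfl⟩ : ∃ m', m = m'+1 := ⟨m-1, by omega⟩
  rw [show 2*(m'+1)-k = (2*(m'+1)-k-1)+1 by omega, show m'+1-1 = m' from rfl]
  rw [Nat.choose_succ_succ]
  push_cast
  ring

lemma sum_G_odd (m k : ℕ) (hk : k ≤ m) :
    ∑ j ∈ Finset.range (2*m+2), G (2*m+1) k j = 2^(k+1) * ((2*m-k).choose m : ℤ) := by
  have := sum_G_gen (2*m+1) k (by omega) (by omega)
  rw [show 2*m+2 = (2*m+1)+1 from rfl] at this
  rw [this, show 2*m+1 - (2*m+1+1)/2 = m by omega,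
      show (2*m+1+1)/2 - 1 = m by omega, show 2*m+1-k-1 = 2*m-k by omega]
  rw [pow_succ]
  ring

open Classical in
lemma sum_indicator {α : Type*} [Fintype α] (P : α → Prop) (c : ℝ) :
    (∑ x : α, if P x then c else 0) = ((Finset.univ.filter P).card : ℝ) * c := by
  rw [← Finset.sum_filter]
  rw [Finset.sum_const, nsmul_eq_mul]

lemma walkProb_eq (n k : ℕ) :
    walkProb (1/2) 0 n (fun S => localCount n S = k)
      = ((Finset.univ.filter fun ε : Fin n → Bool =>
          localCount n (walkFn 0 (extendF false ε)) = k).card : ℝ) / 2^n := by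
  classical
  unfold walkProb
  have hw : ∀ ε : Fin n → Bool, (∏ i, wt (1/2) (ε i)) = (1/2 : ℝ)^n := by
    intro ε
    rw [show (1/2:ℝ)^n = ∏ _i : Fin n, (1/2:ℝ) by
      rw [Finset.prod_const]; simp]
    exact Finset.prod_congr rfl fun i _ => by cases ε i <;> norm_num [wt]
  rw [Finset.sum_congr rfl fun ε _ => by rw [hw ε]]
  rw [sum_indicator]
  rw [div_pow, one_pow, mul_one_div]
  congr 1
  congr 1
  apply Finset.card_bij (fun a _ => a) (by simp) (by simp)
    (fun b hb => ⟨b, by simpa using hb, rfl⟩)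


/-- Local time distribution of the symmetric simple random walk: for even `n` and
`k ≤ n/2`, `P_0{T_n=k} = C(n-k, n/2)/2^{n-k}`; for odd `n`,
`P_0{T_n=k} = C(n-k-1, (n-1)/2)/2^{n-k-1}`. -/
theorem stmt13 (n k : ℕ) (hk : k ≤ n/2) :
    (Even n → walkProb (1/2) 0 n (fun S => localCount n S = k) =
      ((n-k).choose (n/2) : ℝ)/2^(n-k)) ∧
    (Odd n → walkProb (1/2) 0 n (fun S => localCount n S = k) =
      ((n-k-1).choose ((n-1)/2) : ℝ)/2^(n-k-1)) := by
  constructor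
  · intro hn
    obtain ⟨m, rfl⟩ := hn
    have hkm : k ≤ m := by omega
    rw [show m + m = 2*m by ring]
    rcases Nat.eq_zero_or_pos m with rfl | hm
    · obtain rfl : k = 0 := by omega
      rw [walkProb_eq, card_eq_sum_cnt]
      norm_num [cnt_zero]
    · rw [walkProb_eq, card_eq_sum_cnt]
      have h1 : ((∑ j ∈ Finset.range (2*m+1), cnt (2*m) k j : ℕ) : ℤ)
          = 2^k * ((2*m-k).choose m : ℤ) := by
        push_cast [cnt_eq_G]
        exact sum_G_even m k hm hkm
      have hN : ((∑ j ∈ Finset.range (2*m+1), cnt (2*m) k j : ℕ) : ℝ)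
          = 2^k * ((2*m-k).choose m : ℝ) := by exact_mod_cast h1
      rw [show (2*m)+1 = 2*m+1 from rfl, hN, show (2*m)/2 = m by omega]
      rw [show (2:ℝ)^(2*m) = 2^k * 2^(2*m-k) by rw [← pow_add]; congr 1; omega]
      rw [mul_div_mul_left _ _ (by positivity : (2:ℝ)^k ≠ 0)]
  · intro hn
    obtain ⟨m, rfl⟩ := hn
    have hkm : k ≤ m := by omega
    rw [walkProb_eq, card_eq_sum_cnt]
    have h1 : ((∑ j ∈ Finset.range (2*m+2), cnt (2*m+1) k j : ℕ) : ℤ)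
        = 2^(k+1) * ((2*m-k).choose m : ℤ) := by
      push_cast [cnt_eq_G]
      exact sum_G_odd m k hkm
    have hN : ((∑ j ∈ Finset.range (2*m+2), cnt (2*m+1) k j : ℕ) : ℝ)
        = 2^(k+1) * ((2*m-k).choose m : ℝ) := by exact_mod_cast h1
    rw [show (2*m+1)+1 = 2*m+2 from rfl, hN,
        show 2*m+1-k-1 = 2*m-k by omega, show (2*m+1-1)/2 = m by omega]
    rw [show (2:ℝ)^(2*m+1) = 2^(k+1) * 2^(2*m-k) by rw [← pow_add]; congr 1; omega]
    rw [mul_div_mul_left _ _ (by positivity : (2:ℝ)^(k+1) ≠ 0)]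
end
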